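/- Correctness of bidirectional coupling: Let N be a network model, and for each node x let T(x) := ND({w(q) : q a directed path from r to x}) (top-down labels) and B(x) := ND({w(q) : q a directed path from x to t}) (bottom-up labels). Then for every layer index j ∈ {1, …, n+1}, ND(⋃_{x ∈ L_j} ND(T(x) + B(x))) = P(N), where S_1 + S_2 denotes the Minkowski sum {z_1 + z_2 : z_1 ∈ S_1, z_2 ∈ S_2}. -/

import Mathlib

/-!
Every `r`–`t` path crosses layer `j` at some node `x` and splits there into an `r`–`x` and an
`x`–`t` part. If the whole path is nondominated, so are both parts (otherwise swapping in a
dominating part would dominate the whole path), hence its weight lies in the coupling at `x`.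
Conversely every coupling at `x` consists of weights of `r`–`t` paths. So the union `U` of the
couplings satisfies `ND W ⊆ U ⊆ W` for the finite set `W` of path weights, which forces
`ND U = ND W`.
-/

open Pointwise

/-- `y` dominates `y'`: componentwise at least as large and not equal. -/
def dominates {K : ℕ} (y y' : Fin K → ℝ) : Prop :=
  (∀ k, y' k ≤ y k) ∧ y ≠ y'

/-- The nondominated subset of `S`. -/
def ND {K : ℕ} (S : Set (Fin K → ℝ)) : Set (Fin K → ℝ) :=
  {y ∈ S | ¬ ∃ y' ∈ S, dominates y' y}

/-- `IsPath tl hd p u v`: the list of arcs `p` forms a directed walk from `u` to `v`. -/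
def IsPath {V A : Type*} (tl hd : A → V) : List A → V → V → Prop
  | [], u, v => u = v
  | a :: p, u, v => tl a = u ∧ IsPath tl hd p (hd a) v

/-- Total weight of a list of arcs. -/
def pathWeight {A : Type*} {K : ℕ} (w : A → Fin K → ℝ) (p : List A) : Fin K → ℝ :=
  (p.map w).sum

/-- A layered-acyclic network model with `n + 1` layers (indexed `1, …, n+1`),
a single root in layer `1`, a single terminal in layer `n+1`, every arc going
from one layer to the next, and `K`-dimensional arc weights. -/
structure Network (V A : Type*) (K : ℕ) where
  tl : A → V
  hd : A → V
  w : A → Fin K → ℝ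
  n : ℕ
  layer : V → ℕ
  layer_pos : ∀ v, 1 ≤ layer v
  layer_le : ∀ v, layer v ≤ n + 1
  arc_step : ∀ a, layer (hd a) = layer (tl a) + 1
  root : V
  terminal : V
  root_layer : layer root = 1
  terminal_layer : layer terminal = n + 1
  root_unique : ∀ v, layer v = 1 → v = root
  terminal_unique : ∀ v, layer v = n + 1 → v = terminal
  layer_nonempty : ∀ j, 1 ≤ j → j ≤ n + 1 → ∃ v, layer v = j

namespace Network

variable {V A : Type*} {K : ℕ}

/-- The set of directed paths from `u` to `v`. -/
def Paths (N : Network V A K) (u v : V) : Set (List A) :=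
  {p | IsPath N.tl N.hd p u v}

/-- The set of weights of directed paths from `u` to `v`. -/
def weights (N : Network V A K) (u v : V) : Set (Fin K → ℝ) :=
  pathWeight N.w '' N.Paths u v

/-- The Pareto frontier of the network. -/
def Pareto (N : Network V A K) : Set (Fin K → ℝ) :=
  ND (N.weights N.root N.terminal)

end Network

section Dominance

variable {K : ℕ}

theorem dominates_iff_lt {y y' : Fin K → ℝ} : dominates y y' ↔ y' < y :=
  ⟨fun h => lt_of_le_of_ne h.1 h.2.symm, fun h => ⟨h.le, h.ne'⟩⟩

theorem ND_subset (S : Set (Fin K → ℝ)) : ND S ⊆ S := fun _ hy => hy.1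

theorem mem_ND_of_subset {S T : Set (Fin K → ℝ)} {y : Fin K → ℝ} (hST : S ⊆ T) (hy : y ∈ S)
    (hyT : y ∈ ND T) : y ∈ ND S :=
  ⟨hy, fun ⟨y', hy', hdom⟩ => hyT.2 ⟨y', hST hy', hdom⟩⟩

theorem exists_mem_ND_le {S : Set (Fin K → ℝ)} (hS : S.Finite) {y : Fin K → ℝ} (hy : y ∈ S) :
    ∃ a ∈ ND S, y ≤ a := by
  obtain ⟨a, ⟨haS, hya⟩, hmax⟩ := Set.Finite.exists_maximalFor id {z ∈ S | y ≤ z}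
    (hS.subset fun _ hz => hz.1) ⟨y, hy, le_rfl⟩
  refine ⟨a, ⟨haS, ?_⟩, hya⟩
  rintro ⟨y', hy'S, hdom⟩
  rw [dominates_iff_lt] at hdom
  exact (hmax ⟨hy'S, hya.trans hdom.le⟩ hdom.le).not_gt hdom

theorem ND_eq_of_ND_subset_of_subset {S U : Set (Fin K → ℝ)} (hS : S.Finite) (hSU : ND S ⊆ U)
    (hUS : U ⊆ S) : ND U = ND S := by
  refine Set.Subset.antisymm ?_ fun z hz => mem_ND_of_subset hUS (hSU hz) hz
  rintro z ⟨hzU, hznd⟩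
  refine ⟨hUS hzU, ?_⟩
  rintro ⟨y', hy'S, hdom⟩
  obtain ⟨a, haND, hya⟩ := exists_mem_ND_le hS hy'S
  rw [dominates_iff_lt] at hdom
  exact hznd ⟨a, hSU haND, dominates_iff_lt.2 (hdom.trans_le hya)⟩

theorem left_mem_ND_of_add_mem_ND {S T R : Set (Fin K → ℝ)} (hSTR : S + T ⊆ R)
    {a b : Fin K → ℝ} (ha : a ∈ S) (hb : b ∈ T) (hab : a + b ∈ ND R) : a ∈ ND S := by
  refine ⟨ha, ?_⟩
  rintro ⟨a', ha', hdom⟩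
  rw [dominates_iff_lt] at hdom
  exact hab.2 ⟨a' + b, hSTR (Set.add_mem_add ha' hb),
    dominates_iff_lt.2 (add_lt_add_left hdom b)⟩

theorem add_mem_ND_add_ND {S T R : Set (Fin K → ℝ)} (hSTR : S + T ⊆ R)
    {a b : Fin K → ℝ} (ha : a ∈ S) (hb : b ∈ T) (hab : a + b ∈ ND R) :
    a + b ∈ ND (ND S + ND T) := by
  have hTSR : T + S ⊆ R := add_comm S T ▸ hSTR
  have haND : a ∈ ND S := left_mem_ND_of_add_mem_ND hSTR ha hb hab
  have hbND : b ∈ ND T := left_mem_ND_of_add_mem_ND hTSR hb ha (add_comm a b ▸ hab)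
  exact mem_ND_of_subset ((Set.add_subset_add (ND_subset S) (ND_subset T)).trans hSTR)
    (Set.add_mem_add haND hbND) hab

end Dominance

theorem IsPath.append {V A : Type*} {tl hd : A → V} {p q : List A} {u x v : V}
    (hp : IsPath tl hd p u x) (hq : IsPath tl hd q x v) : IsPath tl hd (p ++ q) u v := by
  induction p generalizing u with
  | nil => exact (show u = x from hp) ▸ hq
  | cons a p ih => exact ⟨hp.1, ih hp.2⟩

theorem pathWeight_append {A : Type*} {K : ℕ} (w : A → Fin K → ℝ) (p q : List A) :
    pathWeight w (p ++ q) = pathWeight w p + pathWeight w q := by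
  simp [pathWeight]

namespace Network

variable {V A : Type*} {K : ℕ} (N : Network V A K)

def coupling (x : V) : Set (Fin K → ℝ) :=
  ND (ND (N.weights N.root x) + ND (N.weights x N.terminal))

theorem layer_eq_add_length {p : List A} {u v : V} (hp : p ∈ N.Paths u v) :
    N.layer v = N.layer u + p.length := by
  induction p generalizing u with
  | nil => simp [show u = v from hp]
  | cons a p ih =>
    have hstep := N.arc_step a
    rw [hp.1] at hstep
    rw [ih hp.2, hstep, List.length_cons]
    omega

theorem exists_append_of_mem_paths {p : List A} {u v : V} (hp : p ∈ N.Paths u v) {j : ℕ}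
    (huj : N.layer u ≤ j) (hjv : j ≤ N.layer v) :
    ∃ x, N.layer x = j ∧ ∃ p₁ ∈ N.Paths u x, ∃ p₂ ∈ N.Paths x v, p = p₁ ++ p₂ := by
  induction p generalizing u with
  | nil =>
    obtain rfl : u = v := hp
    exact ⟨u, by omega, [], rfl, [], rfl, rfl⟩
  | cons a p ih =>
    obtain ⟨ha, hp⟩ := hp
    rcases huj.eq_or_lt with rfl | hlt
    · exact ⟨u, rfl, [], rfl, a :: p, ⟨ha, hp⟩, rfl⟩
    · have hstep := N.arc_step a
      rw [ha] at hstep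
      obtain ⟨x, hx, p₁, hp₁, p₂, hp₂, rfl⟩ := ih hp (by omega)
      exact ⟨x, hx, a :: p₁, ⟨ha, hp₁⟩, p₂, hp₂, rfl⟩

theorem weights_finite [Finite A] (u v : V) : (N.weights u v).Finite := by
  refine Set.Finite.image _ ((List.finite_length_le A N.n).subset fun p hp => ?_)
  have := N.layer_eq_add_length hp
  have := N.layer_pos u
  have := N.layer_le v
  show p.length ≤ N.n
  omega

theorem weights_add_weights_subset (u x v : V) :
    N.weights u x + N.weights x v ⊆ N.weights u v := by
  rintro _ ⟨_, ⟨p, hp, rfl⟩, _, ⟨q, hq, rfl⟩, rfl⟩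
  exact ⟨p ++ q, IsPath.append hp hq, pathWeight_append N.w p q⟩

theorem coupling_subset_weights (x : V) : N.coupling x ⊆ N.weights N.root N.terminal :=
  (ND_subset _).trans <| (Set.add_subset_add (ND_subset _) (ND_subset _)).trans <|
    N.weights_add_weights_subset N.root x N.terminal

theorem Pareto_subset_iUnion_coupling {j : ℕ} (hj1 : 1 ≤ j) (hj2 : j ≤ N.n + 1) :
    N.Pareto ⊆ ⋃ x ∈ {x : V | N.layer x = j}, N.coupling x := by
  rintro _ hz
  obtain ⟨p, hp, rfl⟩ := hz.1
  obtain ⟨x, hx, p₁, hp₁, p₂, hp₂, rfl⟩ := N.exists_append_of_mem_paths hp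
    (N.root_layer ▸ hj1) (N.terminal_layer ▸ hj2)
  rw [pathWeight_append] at hz ⊢
  exact Set.mem_biUnion hx <| add_mem_ND_add_ND (N.weights_add_weights_subset _ x _)
    ⟨p₁, hp₁, rfl⟩ ⟨p₂, hp₂, rfl⟩ hz

end Network

theorem bidirectional_coupling_correct_general {V A : Type*} [Fintype A] {K : ℕ}
    (N : Network V A K) (j : ℕ) (hj1 : 1 ≤ j) (hj2 : j ≤ N.n + 1) :
    ND (⋃ x ∈ {x : V | N.layer x = j},
        ND (ND (N.weights N.root x) + ND (N.weights x N.terminal))) = N.Pareto :=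
  ND_eq_of_ND_subset_of_subset (N.weights_finite _ _) (N.Pareto_subset_iUnion_coupling hj1 hj2)
    (Set.iUnion₂_subset fun x _ => N.coupling_subset_weights x)

/-- **Correctness of bidirectional coupling.**  For each node `x` let
`T(x) = ND({w(q) : q an r–x path})` (top-down labels) and
`B(x) = ND({w(q) : q an x–t path})` (bottom-up labels).  Then for every layer index
`j ∈ {1, …, n+1}`, the nondominated set of the union over the nodes `x` of layer `j` of
the couplings `ND(T(x) + B(x))` equals the Pareto frontier of the network. -/
theorem bidirectional_coupling_correct {V A : Type*} [Fintype V] [Fintype A] {K : ℕ}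
    (N : Network V A K) (j : ℕ) (hj1 : 1 ≤ j) (hj2 : j ≤ N.n + 1) :
    ND (⋃ x ∈ {x : V | N.layer x = j},
        ND (ND (N.weights N.root x) + ND (N.weights x N.terminal))) = N.Pareto :=
  bidirectional_coupling_correct_general N j hj1 hj2
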